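/- arXiv:2304.03590 — 3 statements merged into one kernel-verified Lean document; each statement's English description precedes it below -/
import Mathlib

section
/- Define h(u) = 1 + u − sqrt(1 + 2u) for u ≥ 0. Then for all t > 0, A > 0, b > 0: sup over |λ| ≤ 1/b of (λt − λ²A/(2(1 − b|λ|))) = (A/b²)·h(bt/A), and moreover (A/b²)·h(bt/A) ≥ t²/(2(A + bt)). -/
noncomputable def hFun (u : ℝ) : ℝ := 1 + u - Real.sqrt (1 + 2 * u)

theorem stmt_5 (t A b : ℝ) (ht : 0 < t) (hA : 0 < A) (hb : 0 < b) :
    (IsLUB {y : ℝ | ∃ lam : ℝ, |lam| < 1 / b ∧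
        y = lam * t - lam ^ 2 * A / (2 * (1 - b * |lam|))}
      ((A / b ^ 2) * hFun (b * t / A))) ∧
    t ^ 2 / (2 * (A + b * t)) ≤ (A / b ^ 2) * hFun (b * t / A) := by
  have hA' : A ≠ 0 := hA.ne'
  have hb' : b ≠ 0 := hb.ne'
  set s : ℝ := Real.sqrt (1 + 2 * (b * t / A)) with hsdef
  have hs2 : s ^ 2 = 1 + 2 * (b * t / A) := Real.sq_sqrt (by positivity)
  have hs0 : 0 ≤ s := Real.sqrt_nonneg _
  have hs1 : 1 < s := by nlinarith [mul_pos hb ht, div_pos (mul_pos hb ht) hA]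
  have hs' : s ≠ 0 := by linarith
  have ht2 : t = A * (s ^ 2 - 1) / (2 * b) := by
    rw [hs2]; field_simp; ring
  have hhF : (A / b ^ 2) * hFun (b * t / A) = A * (s - 1) ^ 2 / (2 * b ^ 2) := by
    rw [hFun, ← hsdef, ht2]
    field_simp
    ring
  rw [hhF]
  -- the maximizer
  set lam0 : ℝ := (s - 1) / (b * s) with hlam0
  have hlam0nn : 0 ≤ lam0 := by
    apply div_nonneg (by linarith) (by positivity)
  have hlam0abs : |lam0| = lam0 := abs_of_nonneg hlam0nn
  have hlam0lt : |lam0| < 1 / b := by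
    rw [hlam0abs, hlam0, div_lt_div_iff₀ (by positivity) hb]
    nlinarith
  have hval : lam0 * t - lam0 ^ 2 * A / (2 * (1 - b * |lam0|)) =
      A * (s - 1) ^ 2 / (2 * b ^ 2) := by
    rw [hlam0abs, hlam0, ht2]
    have h1 : 1 - b * ((s - 1) / (b * s)) = 1 / s := by
      rw [mul_div_assoc', mul_div_mul_left _ _ hb']
      rw [eq_div_iff hs', sub_mul, div_mul_cancel₀ _ hs']
      ring
    rw [h1]
    field_simp
    ring
  constructor
  · constructor
    · rintro y ⟨lam, hl, rfl⟩
      set m : ℝ := |lam| with hm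
      have hm0 : 0 ≤ m := abs_nonneg lam
      have hml : lam ≤ m := le_abs_self lam
      have hsq : lam ^ 2 = m ^ 2 := (sq_abs lam).symm
      have hbm : b * m < 1 := by
        have := (lt_div_iff₀ hb).mp hl
        linarith
      have hden : 0 < 1 - b * m := by linarith
      have h1 : lam * t - lam ^ 2 * A / (2 * (1 - b * m)) ≤
          m * t - m ^ 2 * A / (2 * (1 - b * m)) := by
        rw [hsq]
        have := mul_le_mul_of_nonneg_right hml ht.le
        linarith
      refine h1.trans ?_
      have key : A * (s - 1) ^ 2 / (2 * b ^ 2) -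
          (m * t - m ^ 2 * A / (2 * (1 - b * m))) =
          A * ((s - 1) * (1 - b * m) - b * m) ^ 2 / (2 * b ^ 2 * (1 - b * m)) := by
        rw [ht2]
        field_simp
        ring
      linarith [key, div_nonneg (mul_nonneg hA.le (sq_nonneg ((s - 1) * (1 - b * m) - b * m)))
        (by positivity : (0:ℝ) ≤ 2 * b ^ 2 * (1 - b * m))]
    · intro w hw
      exact hw ⟨lam0, hlam0lt, hval.symm⟩
  · have key2 : A * (s - 1) ^ 2 / (2 * b ^ 2) - t ^ 2 / (2 * (A + b * t)) =
        A * (s - 1) ^ 4 / (4 * b ^ 2 * (s ^ 2 + 1)) := by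
      rw [ht2]
      have hne : A + b * (A * (s ^ 2 - 1) / (2 * b)) = A * (s ^ 2 + 1) / 2 := by
        field_simp; ring
      rw [hne]
      have : s ^ 2 + 1 ≠ 0 := by positivity
      field_simp
      ring_nf
    linarith [key2, div_nonneg (mul_nonneg hA.le (by positivity : (0:ℝ) ≤ (s-1)^4))
      (by positivity : (0:ℝ) ≤ 4 * b ^ 2 * (s ^ 2 + 1))]
end

section
/- Let 𝒵̃(n,K,n₀) = { Z ∈ [0,1]^{n×K} : each row of Z sums to 1, and each column of Z sums to at least n₀ }. Then a matrix Z ∈ 𝒵̃(n,K,n₀) is an extreme point of this convex polytope if and only if all entries of Z belong to {0,1}. -/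
/-- The polytope of soft assignment matrices: entries in `[0,1]`, rows summing to one,
columns summing to at least `n₀`. -/
def Ztilde (n K n₀ : ℕ) : Set (Matrix (Fin n) (Fin K) ℝ) :=
  {Z | (∀ i k, Z i k ∈ Set.Icc (0 : ℝ) 1) ∧ (∀ i, ∑ k, Z i k = 1) ∧
    (∀ k, (n₀ : ℝ) ≤ ∑ i, Z i k)}

/-!
A `0/1` matrix is an extreme point of the unit cube, hence of every subset of the cube that
contains it. Conversely, let `F` be the set of fractional entries of `Z`. Since the row sums and
the tight column sums are integers, every row meeting `F` and every tight column meeting `F`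
contains at least two entries of `F`. Hence the homogeneous system "row sums vanish, tight column
sums vanish" on matrices supported on `F` has more unknowns than equations once one column
equation is dropped: that of a slack column meeting `F` if there is one, and otherwise an
arbitrary one, which is then implied by the others. A nonzero solution `D` keeps `Z ± t • D`
in the polytope for small `t`, so `Z` is not extreme.
-/

open Finset Filter Topology Module

theorem exists_ne_mem_Ioo_of_sum_eq_intCast {ι : Type*} {s : Finset ι} {x : ι → ℝ} {m : ℤ}
    (hx : ∀ j ∈ s, x j ∈ Set.Icc (0 : ℝ) 1) (hsum : ∑ j ∈ s, x j = m) {j : ι} (hj : j ∈ s)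
    (hxj : x j ∈ Set.Ioo (0 : ℝ) 1) : ∃ j' ∈ s, j' ≠ j ∧ x j' ∈ Set.Ioo (0 : ℝ) 1 := by
  classical
  by_contra! hother
  have hboole : ∀ j' ∈ s.erase j, x j' = if x j' = 1 then 1 else 0 := by
    intro j' hj'
    obtain ⟨hne, hj's⟩ := mem_erase.1 hj'
    have h0 := hx j' hj's
    have h1 := hother j' hj's hne
    split_ifs with h
    · exact h
    · by_contra h'
      exact h1 ⟨h0.1.lt_of_ne' h', h0.2.lt_of_ne h⟩
  have hxj_int : x j = ((m - #{j' ∈ s.erase j | x j' = 1} : ℤ) : ℝ) := by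
    rw [← add_sum_erase s x hj, sum_congr rfl hboole, sum_boole] at hsum
    push_cast
    linarith
  obtain ⟨h0, h1⟩ := hxj
  rw [hxj_int] at h0 h1
  norm_cast at h0 h1
  omega

theorem two_mul_card_le_sum_card_fiber {γ δ : Type*} [DecidableEq δ] {F : Finset γ}
    {f : γ → δ} {s : Finset δ} (h : ∀ c ∈ s, 1 < #{a ∈ F | f a = c}) :
    2 * #s ≤ ∑ c ∈ s, #{a ∈ F | f a = c} := by
  rw [mul_comm, ← smul_eq_mul, ← sum_const]
  exact sum_le_sum h

theorem sum_card_fiber_le_card {γ δ : Type*} [DecidableEq δ] (F : Finset γ) (f : γ → δ)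
    (s : Finset δ) : ∑ c ∈ s, #{a ∈ F | f a = c} ≤ #F :=
  (sum_card_fiberwise_eq_card_filter F s f).trans_le (card_filter_le _ _)

theorem Matrix.exists_ne_zero_forall_sum_eq_zero {α β 𝕜 : Type*} [Fintype α] [Fintype β]
    [DecidableEq α] [DecidableEq β] [Field 𝕜] (F : Finset (α × β)) (R : Finset α)
    (C : Finset β) (hcard : #R + #C < #F) :
    ∃ D : Matrix α β 𝕜, D ≠ 0 ∧ (∀ i k, (i, k) ∉ F → D i k = 0) ∧
      (∀ i ∈ R, ∑ k, D i k = 0) ∧ ∀ k ∈ C, ∑ i, D i k = 0 := by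
  let L : Matrix α β 𝕜 →ₗ[𝕜] ((↥Fᶜ → 𝕜) × (↥R → 𝕜)) × (↥C → 𝕜) :=
    { toFun D := ((fun p => D p.1.1 p.1.2, fun i => ∑ k, D i k), fun k => ∑ i, D i k)
      map_add' D D' := by ext <;> simp [sum_add_distrib]
      map_smul' c D := by ext <;> simp [mul_sum] }
  have hdim : finrank 𝕜 (((↥Fᶜ → 𝕜) × (↥R → 𝕜)) × (↥C → 𝕜)) < finrank 𝕜 (Matrix α β 𝕜) := by
    have := F.card_le_univ
    simp only [finrank_prod, finrank_pi, Fintype.card_coe, card_compl, finrank_matrix,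
      finrank_self, Fintype.card_prod] at this ⊢
    omega
  obtain ⟨D, hD, hD0⟩ := (Submodule.ne_bot_iff _).1 (L.ker_ne_bot_of_finrank_lt hdim)
  simp only [LinearMap.mem_ker, L, LinearMap.coe_mk, AddHom.coe_mk, Prod.ext_iff, funext_iff] at hD
  exact ⟨D, hD0, fun i k hik => hD.1.1 ⟨(i, k), mem_compl.2 hik⟩,
    fun i hi => hD.1.2 ⟨i, hi⟩, fun k hk => hD.2 ⟨k, hk⟩⟩

theorem eq_zero_of_mem_extremePoints_of_eventually_add_smul_mem {E : Type*} [AddCommGroup E]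
    [Module ℝ E] {A : Set E} {x v : E} (hx : x ∈ A.extremePoints ℝ)
    (h : ∀ᶠ t in 𝓝 (0 : ℝ), x + t • v ∈ A) : v = 0 := by
  have hneg : ∀ᶠ t in 𝓝 (0 : ℝ), x + (-t) • v ∈ A :=
    (continuous_neg.tendsto' 0 0 neg_zero).eventually h
  obtain ⟨t, ⟨hplus, hminus⟩, ht⟩ :=
    (((h.and hneg).filter_mono nhdsWithin_le_nhds).and (self_mem_nhdsWithin (s := Set.Ioi 0))).exists
  have hseg : x ∈ openSegment ℝ (x + (-t) • v) (x + t • v) :=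
    ⟨1 / 2, 1 / 2, by norm_num, by norm_num, by norm_num, by module⟩
  have := hx.2 hminus hplus hseg
  simpa [ne_of_gt ht] using this

namespace Ztilde

variable {n K n₀ : ℕ} {Z : Matrix (Fin n) (Fin K) ℝ}

theorem mem_extremePoints_of_forall_eq_zero_or_eq_one (hZ : Z ∈ Ztilde n K n₀)
    (h01 : ∀ i k, Z i k = 0 ∨ Z i k = 1) : Z ∈ (Ztilde n K n₀).extremePoints ℝ := by
  let cube : Set (Fin n → Fin K → ℝ) := Set.univ.pi fun _ => Set.univ.pi fun _ => Set.Icc 0 1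
  have hcube : Ztilde n K n₀ ⊆ cube :=
    fun Z hZ => Set.mem_univ_pi.2 fun i => Set.mem_univ_pi.2 (hZ.1 i)
  have hZcube : (Z : Fin n → Fin K → ℝ) ∈ cube.extremePoints ℝ := by
    rw [extremePoints_pi]
    refine Set.mem_univ_pi.2 fun i => ?_
    rw [extremePoints_pi]
    exact Set.mem_univ_pi.2 fun k => by simpa using h01 i k
  exact inter_extremePoints_subset_extremePoints_of_subset hcube ⟨hZ, hZcube⟩

theorem eventually_add_smul_mem (hZ : Z ∈ Ztilde n K n₀) {D : Matrix (Fin n) (Fin K) ℝ}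
    (hsupp : ∀ i k, D i k ≠ 0 → Z i k ∈ Set.Ioo 0 1) (hrow : ∀ i, ∑ k, D i k = 0)
    (hcol : ∀ k, ∑ i, D i k ≠ 0 → (n₀ : ℝ) < ∑ i, Z i k) :
    ∀ᶠ t in 𝓝 (0 : ℝ), Z + t • D ∈ Ztilde n K n₀ := by
  obtain ⟨hboxZ, hrowZ, hcolZ⟩ := hZ
  have hentry : ∀ i k, ∀ᶠ t in 𝓝 (0 : ℝ), Z i k + t * D i k ∈ Set.Icc (0 : ℝ) 1 := by
    intro i k
    by_cases hD : D i k = 0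
    · simp [hD, hboxZ i k]
    · have hcont : Tendsto (fun t : ℝ => Z i k + t * D i k) (𝓝 0) (𝓝 (Z i k)) := by
        simpa using (by fun_prop : Continuous fun t : ℝ => Z i k + t * D i k).tendsto 0
      exact (hcont.eventually (isOpen_Ioo.mem_nhds (hsupp i k hD))).mono
        fun _ h => Set.Ioo_subset_Icc_self h
  have hcolumn : ∀ k, ∀ᶠ t in 𝓝 (0 : ℝ), (n₀ : ℝ) ≤ ∑ i, Z i k + t * ∑ i, D i k := by
    intro k
    by_cases hD : ∑ i, D i k = 0
    · simp [hD, hcolZ k]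
    · have hcont : Tendsto (fun t : ℝ => ∑ i, Z i k + t * ∑ i, D i k) (𝓝 0)
          (𝓝 (∑ i, Z i k)) := by
        simpa using (by fun_prop : Continuous fun t : ℝ => ∑ i, Z i k + t * ∑ i, D i k).tendsto 0
      exact (hcont.eventually (lt_mem_nhds (hcol k hD))).mono fun _ => le_of_lt
  filter_upwards [eventually_all.2 fun i => eventually_all.2 (hentry i),
    eventually_all.2 hcolumn] with t hbox hcolumn
  refine ⟨fun i k => by simpa using hbox i k, fun i => ?_, fun k => ?_⟩
  · simp [sum_add_distrib, ← mul_sum, hrowZ i, hrow i]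
  · simpa [sum_add_distrib, ← mul_sum] using hcolumn k

theorem exists_ne_mem_Ioo_of_row (hZ : Z ∈ Ztilde n K n₀) {i : Fin n} {k : Fin K}
    (h : Z i k ∈ Set.Ioo 0 1) : ∃ k' ≠ k, Z i k' ∈ Set.Ioo 0 1 := by
  obtain ⟨k', -, hk', h'⟩ := exists_ne_mem_Ioo_of_sum_eq_intCast (m := 1)
    (fun k _ => hZ.1 i k) (by rw [hZ.2.1 i]; norm_num) (mem_univ k) h
  exact ⟨k', hk', h'⟩

theorem exists_ne_mem_Ioo_of_col (hZ : Z ∈ Ztilde n K n₀) {i : Fin n} {k : Fin K}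
    (htight : ∑ i, Z i k = n₀) (h : Z i k ∈ Set.Ioo 0 1) : ∃ i' ≠ i, Z i' k ∈ Set.Ioo 0 1 := by
  obtain ⟨i', -, hi', h'⟩ := exists_ne_mem_Ioo_of_sum_eq_intCast (m := n₀)
    (fun i _ => hZ.1 i k) (by rw [htight]; norm_cast) (mem_univ i) h
  exact ⟨i', hi', h'⟩

theorem exists_ne_zero_sum_eq_zero_of_mem_Ioo (hZ : Z ∈ Ztilde n K n₀) {i' : Fin n}
    {k' : Fin K} (h' : Z i' k' ∈ Set.Ioo 0 1) :
    ∃ D : Matrix (Fin n) (Fin K) ℝ, D ≠ 0 ∧ (∀ i k, D i k ≠ 0 → Z i k ∈ Set.Ioo 0 1) ∧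
      (∀ i, ∑ k, D i k = 0) ∧ ∀ k ≠ k', ∑ i, Z i k = n₀ → ∑ i, D i k = 0 := by
  classical
  let F : Finset (Fin n × Fin K) := {p | Z p.1 p.2 ∈ Set.Ioo 0 1}
  let R : Finset (Fin n) := {i | ∃ k, Z i k ∈ Set.Ioo 0 1}
  let C : Finset (Fin K) := {k | k ≠ k' ∧ (∃ i, Z i k ∈ Set.Ioo 0 1) ∧ ∑ i, Z i k = n₀}
  have hRfiber : ∀ i ∈ R, 1 < #{p ∈ F | p.1 = i} := fun i hi => by
    obtain ⟨k, hk⟩ := (mem_filter.1 hi).2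
    obtain ⟨k'', hne, hk''⟩ := exists_ne_mem_Ioo_of_row hZ hk
    exact one_lt_card.2 ⟨(i, k), by simpa [F] using hk, (i, k''), by simpa [F] using hk'',
      by simpa using hne.symm⟩
  have hCfiber : ∀ k ∈ C, 1 < #{p ∈ F | p.2 = k} := fun k hk => by
    obtain ⟨-, ⟨i, hi⟩, htight⟩ := (mem_filter.1 hk).2
    obtain ⟨i'', hne, hi''⟩ := exists_ne_mem_Ioo_of_col hZ htight hi
    exact one_lt_card.2 ⟨(i, k), by simpa [F] using hi, (i'', k), by simpa [F] using hi'',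
      by simpa using hne.symm⟩
  have hR : 2 * #R ≤ #F :=
    (two_mul_card_le_sum_card_fiber hRfiber).trans (sum_card_fiber_le_card F Prod.fst R)
  have hC : 2 * #C < #F := calc
    2 * #C < ∑ k ∈ C, #{p ∈ F | p.2 = k} + #{p ∈ F | p.2 = k'} :=
      lt_add_of_le_of_pos (two_mul_card_le_sum_card_fiber hCfiber)
        (card_pos.2 ⟨(i', k'), by simpa [F] using h'⟩)
    _ = ∑ k ∈ insert k' C, #{p ∈ F | p.2 = k} := by rw [sum_insert (by simp [C]), add_comm]
    _ ≤ #F := sum_card_fiber_le_card F Prod.snd _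
  obtain ⟨D, hD0, hDF, hDR, hDC⟩ :=
    Matrix.exists_ne_zero_forall_sum_eq_zero (𝕜 := ℝ) F R C (by omega)
  have hsupp : ∀ i k, D i k ≠ 0 → Z i k ∈ Set.Ioo 0 1 := fun i k hD => by
    by_contra h
    exact hD (hDF i k (by simpa [F] using h))
  refine ⟨D, hD0, hsupp, fun i => ?_, fun k hk htight => ?_⟩
  · by_cases hi : i ∈ R
    · exact hDR i hi
    · exact sum_eq_zero fun k _ => by_contra fun hD => hi (by simpa [R] using ⟨k, hsupp i k hD⟩)
  · by_cases hfrac : ∃ i, Z i k ∈ Set.Ioo 0 1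
    · exact hDC k (mem_filter.2 ⟨mem_univ k, hk, hfrac, htight⟩)
    · exact sum_eq_zero fun i _ => by_contra fun hD => hfrac ⟨i, hsupp i k hD⟩

theorem exists_ne_zero_eventually_add_smul_mem (hZ : Z ∈ Ztilde n K n₀) {i₀ : Fin n}
    {k₀ : Fin K} (h₀ : Z i₀ k₀ ∈ Set.Ioo 0 1) :
    ∃ D : Matrix (Fin n) (Fin K) ℝ, D ≠ 0 ∧ ∀ᶠ t in 𝓝 (0 : ℝ), Z + t • D ∈ Ztilde n K n₀ := by
  obtain ⟨k', ⟨i', h'⟩, hk'⟩ : ∃ k', (∃ i, Z i k' ∈ Set.Ioo 0 1) ∧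
      (∑ i, Z i k' = n₀ → ∀ k, (∃ i, Z i k ∈ Set.Ioo 0 1) → ∑ i, Z i k = n₀) := by
    by_cases hslack : ∃ k, (∃ i, Z i k ∈ Set.Ioo 0 1) ∧ ∑ i, Z i k ≠ n₀
    · obtain ⟨k, hk, hslack⟩ := hslack
      exact ⟨k, hk, fun h => absurd h hslack⟩
    · push Not at hslack
      exact ⟨k₀, ⟨i₀, h₀⟩, fun _ => hslack⟩
  obtain ⟨D, hD0, hsupp, hrow, hcol⟩ := exists_ne_zero_sum_eq_zero_of_mem_Ioo hZ h'
  have hcol_of_not_mem_Ioo : ∀ k, (¬ ∃ i, Z i k ∈ Set.Ioo 0 1) → ∑ i, D i k = 0 :=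
    fun k hk => sum_eq_zero fun i _ => by_contra fun hD => hk ⟨i, hsupp i k hD⟩
  refine ⟨D, hD0, eventually_add_smul_mem hZ hsupp hrow fun k hk =>
    lt_of_le_of_ne (hZ.2.2 k) fun htight => hk ?_⟩
  obtain rfl | hkk' := eq_or_ne k k'
  · -- every column is now tight or free of fractional entries, and the column sums of `D`
    -- add up to its row sums
    have hother : ∀ k'' ≠ k, ∑ i, D i k'' = 0 := fun k'' hk'' => by
      by_cases hfrac : ∃ i, Z i k'' ∈ Set.Ioo 0 1
      · exact hcol k'' hk'' (hk' htight.symm k'' hfrac)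
      · exact hcol_of_not_mem_Ioo k'' hfrac
    have htotal : ∑ k, ∑ i, D i k = 0 := by rw [sum_comm]; exact sum_eq_zero fun i _ => hrow i
    rwa [Fintype.sum_eq_single k hother] at htotal
  · exact hcol k hkk' htight.symm

end Ztilde

theorem stmt_16_general (n K n₀ : ℕ)
    (Z : Matrix (Fin n) (Fin K) ℝ) (hZ : Z ∈ Ztilde n K n₀) :
    Z ∈ Set.extremePoints ℝ (Ztilde n K n₀) ↔ ∀ i k, Z i k = 0 ∨ Z i k = 1 := by
  refine ⟨fun hext => ?_, Ztilde.mem_extremePoints_of_forall_eq_zero_or_eq_one hZ⟩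
  by_contra! hfrac
  obtain ⟨i₀, k₀, h0, h1⟩ := hfrac
  have h₀ : Z i₀ k₀ ∈ Set.Ioo 0 1 := ⟨(hZ.1 i₀ k₀).1.lt_of_ne' h0, (hZ.1 i₀ k₀).2.lt_of_ne h1⟩
  obtain ⟨D, hD0, hD⟩ := Ztilde.exists_ne_zero_eventually_add_smul_mem hZ h₀
  exact hD0 (eq_zero_of_mem_extremePoints_of_eventually_add_smul_mem hext hD)

theorem stmt_16 (n K n₀ : ℕ) (hn : 0 < n) (hK : 0 < K) (hn₀ : 0 < n₀) (h : K * n₀ ≤ n)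
    (Z : Matrix (Fin n) (Fin K) ℝ) (hZ : Z ∈ Ztilde n K n₀) :
    Z ∈ Set.extremePoints ℝ (Ztilde n K n₀) ↔ ∀ i k, Z i k = 0 ∨ Z i k = 1 :=
  stmt_16_general n K n₀ Z hZ
end

section
/- Let X ~ Binomial(n, 1/2) and Y ~ Binomial(m, 1/2) be independent. Then for every λ with |λ| ≤ 2/sqrt(nm), E[exp(λ·(X − n/2)·(Y − m/2))] ≤ exp(5·n·m·λ²/32). -/
/-!
Conditionally on `X`, the expectation over `Y` is the moment generating function of a centred
binomial, `cosh (t / 2) ^ m ≤ exp (m t² / 8)`. This leaves `E[exp (a (X - n/2)²)]` with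
`a = m λ² / 8`, which the Gaussian linearisation `exp (a z²) = E[exp (√(2a) z G)]`, `G ~ N(0, 1)`,
together with the same bound for `X`, turns into `E[exp (a n G² / 4)] = (1 - a n / 2)^(-1/2)`.
For `λ² n m ≤ 4` this is at most `exp (5 n m λ² / 32)`.
-/

open MeasureTheory ProbabilityTheory Real Finset

section FiniteSupport

variable {Ω α β : Type*} [MeasurableSpace Ω] {μ : Measure Ω}
  [MeasurableSpace α] [MeasurableSingletonClass α] [MeasurableSpace β] [MeasurableSingletonClass β]

lemma ae_mem_of_sum_measure_preimage_singleton_eq_one [IsProbabilityMeasure μ] {X : Ω → α}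
    (hX : Measurable X) {S : Finset α} (hS : ∑ x ∈ S, μ (X ⁻¹' {x}) = 1) :
    ∀ᵐ ω ∂μ, X ω ∈ S := by
  have := Measure.isProbabilityMeasure_map (μ := μ) hX.aemeasurable
  refine ae_of_ae_map hX.aemeasurable ((prob_compl_eq_zero_iff S.measurableSet).mpr ?_)
  rw [← sum_measure_singleton]
  simpa [Measure.map_apply hX (measurableSet_singleton _)] using hS

lemma integral_eq_sum_of_ae_mem_finset {ν : Measure α} [IsFiniteMeasure ν] {S : Finset α}
    (hS : ∀ᵐ x ∂ν, x ∈ S) (f : α → ℝ) : ∫ x, f x ∂ν = ∑ x ∈ S, ν.real {x} * f x := by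
  have hf : IntegrableOn f S ν := by
    have h := (integrableOn_finset_iUnion (s := S) (t := fun x ↦ {x})).mpr
      fun x _ ↦ integrableOn_singleton (f := f) (μ := ν)
    rwa [← Finset.set_biUnion_coe, Set.biUnion_of_singleton] at h
  calc ∫ x, f x ∂ν = ∫ x in S, f x ∂ν := by rw [Measure.restrict_eq_self_of_ae_mem hS]
    _ = ∑ x ∈ S, ν.real {x} * f x := setIntegral_finset S hf

lemma integral_comp_eq_sum_of_indepFun [IsFiniteMeasure μ] {X : Ω → α} {Y : Ω → β}
    (hX : Measurable X) (hY : Measurable Y) (hXY : IndepFun X Y μ) {S : Finset α} {T : Finset β}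
    (hXS : ∀ᵐ ω ∂μ, X ω ∈ S) (hYT : ∀ᵐ ω ∂μ, Y ω ∈ T) {f : α × β → ℝ} (hf : Measurable f) :
    ∫ ω, f (X ω, Y ω) ∂μ =
      ∑ x ∈ S, μ.real (X ⁻¹' {x}) * ∑ y ∈ T, μ.real (Y ⁻¹' {y}) * f (x, y) := by
  have hXY_meas : Measurable fun ω ↦ (X ω, Y ω) := hX.prodMk hY
  have hST : ∀ᵐ p ∂μ.map fun ω ↦ (X ω, Y ω), p ∈ S ×ˢ T := by
    refine (ae_map_iff hXY_meas.aemeasurable (S ×ˢ T).measurableSet).mpr ?_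
    filter_upwards [hXS, hYT] with ω hx hy using Finset.mem_product.mpr ⟨hx, hy⟩
  rw [← integral_map hXY_meas.aemeasurable hf.aestronglyMeasurable,
    integral_eq_sum_of_ae_mem_finset hST, Finset.sum_product]
  refine Finset.sum_congr rfl fun x _ ↦ ?_
  rw [Finset.mul_sum]
  refine Finset.sum_congr rfl fun y _ ↦ ?_
  have hpre : (fun ω ↦ (X ω, Y ω)) ⁻¹' {(x, y)} = X ⁻¹' {x} ∩ Y ⁻¹' {y} := by
    ext ω; simp
  rw [map_measureReal_apply hXY_meas (measurableSet_singleton _), hpre, measureReal_def,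
    hXY.measure_inter_preimage_eq_mul _ _ (measurableSet_singleton _) (measurableSet_singleton _),
    ENNReal.toReal_mul, measureReal_def, measureReal_def]
  ring

end FiniteSupport

lemma integral_exp_mul_gaussianReal (t : ℝ) :
    ∫ g, exp (t * g) ∂gaussianReal 0 1 = exp (t ^ 2 / 2) := by
  simpa [mgf] using congrFun (mgf_fun_id_gaussianReal (μ := 0) (v := 1)) t

lemma gaussianPDFReal_mul_exp_mul_sq (a g : ℝ) :
    gaussianPDFReal 0 1 g * exp (a * g ^ 2) = (√(2 * π))⁻¹ * exp (-(1 / 2 - a) * g ^ 2) := by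
  rw [gaussianPDFReal, NNReal.coe_one, mul_one, mul_assoc, ← exp_add]
  congr 2
  ring

lemma integrable_exp_mul_sq_gaussianReal {a : ℝ} (ha : a < 1 / 2) :
    Integrable (fun g ↦ exp (a * g ^ 2)) (gaussianReal 0 1) := by
  rw [gaussianReal_of_var_ne_zero _ one_ne_zero,
    integrable_withDensity_iff_integrable_smul' (measurable_gaussianPDF 0 1)
      (ae_of_all _ fun _ ↦ gaussianPDF_lt_top)]
  simp_rw [toReal_gaussianPDF, smul_eq_mul, gaussianPDFReal_mul_exp_mul_sq]
  exact (integrable_exp_neg_mul_sq (by linarith)).const_mul _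

lemma integral_exp_mul_sq_gaussianReal {a : ℝ} (ha : a < 1 / 2) :
    ∫ g, exp (a * g ^ 2) ∂gaussianReal 0 1 = (√(1 - 2 * a))⁻¹ := by
  simp_rw [integral_gaussianReal_eq_integral_smul one_ne_zero, smul_eq_mul,
    gaussianPDFReal_mul_exp_mul_sq, integral_const_mul, integral_gaussian]
  have h : 0 < 1 - 2 * a := by linarith
  rw [show π / (1 / 2 - a) = 2 * π / (1 - 2 * a) by field_simp, sqrt_div' _ h.le]
  field_simp

lemma inv_sqrt_one_sub_le_exp {x : ℝ} (h0 : 0 ≤ x) (h1 : x ≤ 4 / 5) :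
    (√(1 - x))⁻¹ ≤ exp (5 * x / 2) := by
  have hpos : 0 < 1 - x := by linarith
  rw [← sqrt_inv, exp_half]
  refine sqrt_le_sqrt ((inv_le_iff_one_le_mul₀ hpos).mpr ?_)
  nlinarith [add_one_le_exp (5 * x)]

lemma sq_mul_le_of_abs_le_div_sqrt {lam c x : ℝ} (hx : 0 ≤ x) (h : |lam| ≤ c / √x) :
    lam ^ 2 * x ≤ c ^ 2 := by
  rcases hx.eq_or_lt with rfl | hx
  · simpa using sq_nonneg c
  have h2 := pow_le_pow_left₀ (abs_nonneg lam) h 2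
  rwa [sq_abs, div_pow, sq_sqrt hx.le, le_div_iff₀ hx] at h2

lemma sum_choose_mul_half_pow (n : ℕ) :
    ∑ k ∈ range (n + 1), (n.choose k : ℝ) * (1 / 2) ^ n = 1 := by
  rw [← Finset.sum_mul, ← Nat.cast_sum, Nat.sum_range_choose]
  simp

noncomputable def centeredBinomialMean (n : ℕ) (f : ℝ → ℝ) : ℝ :=
  ∑ k ∈ range (n + 1), (n.choose k : ℝ) * (1 / 2) ^ n * f (k - n / 2)

namespace centeredBinomialMean

lemma mono {n : ℕ} {f g : ℝ → ℝ} (h : ∀ z, f z ≤ g z) :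
    centeredBinomialMean n f ≤ centeredBinomialMean n g :=
  Finset.sum_le_sum fun _ _ ↦ mul_le_mul_of_nonneg_left (h _) (by positivity)

lemma exp_mul (n : ℕ) (t : ℝ) :
    centeredBinomialMean n (fun z ↦ exp (t * z)) = cosh (t / 2) ^ n := by
  have hcosh : cosh (t / 2) = exp (t / 2) * (1 / 2) + exp (-(t / 2)) * (1 / 2) := by
    rw [cosh_eq]; ring
  rw [centeredBinomialMean, hcosh, add_pow]
  refine Finset.sum_congr rfl fun k hk ↦ ?_
  have hk : k ≤ n := Nat.lt_succ_iff.mp (Finset.mem_range.mp hk)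
  rw [mul_pow, mul_pow, ← exp_nat_mul, ← exp_nat_mul, Nat.cast_sub hk,
    ← pow_mul_pow_sub (1 / 2 : ℝ) hk]
  have : t * (k - n / 2) = k * (t / 2) + (n - k) * (-(t / 2)) := by ring
  rw [this, exp_add]
  ring

lemma exp_mul_le (n : ℕ) (t : ℝ) :
    centeredBinomialMean n (fun z ↦ exp (t * z)) ≤ exp (n * t ^ 2 / 8) :=
  calc centeredBinomialMean n (fun z ↦ exp (t * z)) = cosh (t / 2) ^ n := exp_mul n t
    _ ≤ exp ((t / 2) ^ 2 / 2) ^ n := pow_le_pow_left₀ (cosh_pos _).le (cosh_le_exp_half_sq _) n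
    _ = exp (n * t ^ 2 / 8) := by rw [← exp_nat_mul]; ring_nf

lemma exp_mul_sq_le {n : ℕ} {a : ℝ} (ha : 0 ≤ a) (han : a * n < 2) :
    centeredBinomialMean n (fun z ↦ exp (a * z ^ 2)) ≤ (√(1 - a * n / 2))⁻¹ := by
  set s := √(2 * a)
  have hs : s ^ 2 = 2 * a := sq_sqrt (by positivity)
  have hgauss : ∀ z, exp (a * z ^ 2) = ∫ g, exp (s * g * z) ∂gaussianReal 0 1 := fun z ↦ by
    simp_rw [mul_right_comm s _ z, integral_exp_mul_gaussianReal, mul_pow, hs]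
    ring_nf
  have hint : ∀ z, Integrable (fun g ↦ exp (s * g * z)) (gaussianReal 0 1) := fun z ↦ by
    simpa only [mul_right_comm s z] using integrable_exp_mul_gaussianReal (s * z)
  calc centeredBinomialMean n (fun z ↦ exp (a * z ^ 2))
      = ∫ g, centeredBinomialMean n (fun z ↦ exp (s * g * z)) ∂gaussianReal 0 1 := by
        simp_rw [centeredBinomialMean, hgauss]
        rw [integral_finsetSum _ fun k _ ↦ (hint _).const_mul _]
        simp_rw [integral_const_mul]
    _ ≤ ∫ g, exp (a * n / 4 * g ^ 2) ∂gaussianReal 0 1 := by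
        refine integral_mono ?_ (integrable_exp_mul_sq_gaussianReal (by linarith))
          fun g ↦ (exp_mul_le n _).trans_eq ?_
        · exact integrable_finsetSum _ fun k _ ↦ (hint _).const_mul _
        · rw [mul_pow, hs]; ring_nf
    _ = (√(1 - a * n / 2))⁻¹ := by
        rw [integral_exp_mul_sq_gaussianReal (by linarith)]; ring_nf

lemma exp_mul_mul_le {n m : ℕ} {lam : ℝ} (h : lam ^ 2 * n * m < 16) :
    centeredBinomialMean n (fun z ↦ centeredBinomialMean m fun w ↦ exp (lam * z * w)) ≤
      (√(1 - lam ^ 2 * n * m / 16))⁻¹ :=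
  calc centeredBinomialMean n (fun z ↦ centeredBinomialMean m fun w ↦ exp (lam * z * w))
      ≤ centeredBinomialMean n (fun z ↦ exp (m * lam ^ 2 / 8 * z ^ 2)) :=
        mono fun z ↦ (exp_mul_le m (lam * z)).trans_eq (by ring_nf)
    _ ≤ (√(1 - m * lam ^ 2 / 8 * n / 2))⁻¹ := exp_mul_sq_le (by positivity) (by linarith)
    _ = (√(1 - lam ^ 2 * n * m / 16))⁻¹ := by ring_nf

end centeredBinomialMean

def HasBinomialHalfLaw {Ω : Type*} [MeasurableSpace Ω] (μ : Measure Ω) (X : Ω → ℝ) (n : ℕ) : Prop :=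
  ∀ k : ℕ, μ {ω | X ω = k} = ENNReal.ofReal ((n.choose k : ℝ) * (1 / 2) ^ n)

namespace HasBinomialHalfLaw

variable {Ω : Type*} [MeasurableSpace Ω] {μ : Measure Ω} {X : Ω → ℝ} {n : ℕ}

lemma ae_mem [IsProbabilityMeasure μ] (hX : Measurable X) (hlaw : HasBinomialHalfLaw μ X n) :
    ∀ᵐ ω ∂μ, X ω ∈ (range (n + 1)).image (Nat.cast : ℕ → ℝ) := by
  refine ae_mem_of_sum_measure_preimage_singleton_eq_one hX ?_
  rw [sum_image Nat.cast_injective.injOn]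
  refine (Finset.sum_congr rfl fun k _ ↦ hlaw k).trans ?_
  rw [← ENNReal.ofReal_sum_of_nonneg fun _ _ ↦ by positivity, sum_choose_mul_half_pow,
    ENNReal.ofReal_one]

lemma sum_measureReal_mul (hlaw : HasBinomialHalfLaw μ X n) (F : ℝ → ℝ) :
    ∑ x ∈ (range (n + 1)).image (Nat.cast : ℕ → ℝ), μ.real (X ⁻¹' {x}) * F (x - n / 2) =
      centeredBinomialMean n F := by
  rw [sum_image Nat.cast_injective.injOn]
  refine Finset.sum_congr rfl fun k _ ↦ ?_
  rw [measureReal_def, show μ (X ⁻¹' {(k : ℝ)}) = _ from hlaw k,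
    ENNReal.toReal_ofReal (by positivity)]

lemma integral_comp_eq_centeredBinomialMean [IsProbabilityMeasure μ] {Y : Ω → ℝ} {m : ℕ}
    (hX : Measurable X) (hY : Measurable Y) (hXlaw : HasBinomialHalfLaw μ X n)
    (hYlaw : HasBinomialHalfLaw μ Y m) (hXY : IndepFun X Y μ) {f : ℝ → ℝ → ℝ}
    (hf : Measurable fun p : ℝ × ℝ ↦ f p.1 p.2) :
    ∫ ω, f (X ω - n / 2) (Y ω - m / 2) ∂μ =
      centeredBinomialMean n fun z ↦ centeredBinomialMean m (f z) := by
  rw [integral_comp_eq_sum_of_indepFun (f := fun p ↦ f (p.1 - n / 2) (p.2 - m / 2)) hX hY hXY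
    (hXlaw.ae_mem hX) (hYlaw.ae_mem hY) (by fun_prop)]
  simp_rw [hYlaw.sum_measureReal_mul]
  exact hXlaw.sum_measureReal_mul fun z ↦ centeredBinomialMean m (f z)

end HasBinomialHalfLaw

theorem stmt_19_general {Ω : Type*} [MeasurableSpace Ω] (μ : Measure Ω) [IsProbabilityMeasure μ]
    (n m : ℕ)
    (X Y : Ω → ℝ) (hXmeas : Measurable X) (hYmeas : Measurable Y)
    (hXlaw : ∀ k : ℕ, μ {ω | X ω = k} = ENNReal.ofReal ((n.choose k : ℝ) * (1 / 2) ^ n))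
    (hYlaw : ∀ k : ℕ, μ {ω | Y ω = k} = ENNReal.ofReal ((m.choose k : ℝ) * (1 / 2) ^ m))
    (hindep : ProbabilityTheory.IndepFun X Y μ) :
    ∀ lam : ℝ, |lam| ≤ 2 / Real.sqrt (n * m) →
      ∫ ω, Real.exp (lam * (X ω - n / 2) * (Y ω - m / 2)) ∂μ ≤
        Real.exp (5 * n * m * lam ^ 2 / 32) := by
  intro lam hlam
  have hlam2 : lam ^ 2 * n * m ≤ 4 := by
    rw [mul_assoc]; linarith [sq_mul_le_of_abs_le_div_sqrt (by positivity) hlam]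
  calc ∫ ω, exp (lam * (X ω - n / 2) * (Y ω - m / 2)) ∂μ
      = centeredBinomialMean n fun z ↦ centeredBinomialMean m fun w ↦ exp (lam * z * w) :=
        HasBinomialHalfLaw.integral_comp_eq_centeredBinomialMean hXmeas hYmeas hXlaw hYlaw hindep
          (f := fun z w ↦ exp (lam * z * w)) (by fun_prop)
    _ ≤ (√(1 - lam ^ 2 * n * m / 16))⁻¹ := centeredBinomialMean.exp_mul_mul_le (by linarith)
    _ ≤ exp (5 * (lam ^ 2 * n * m / 16) / 2) := inv_sqrt_one_sub_le_exp (by positivity) (by linarith)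
    _ = exp (5 * n * m * lam ^ 2 / 32) := by ring_nf

theorem stmt_19 {Ω : Type*} [MeasurableSpace Ω] (μ : Measure Ω) [IsProbabilityMeasure μ]
    (n m : ℕ) (hn : 1 ≤ n) (hm : 1 ≤ m)
    (X Y : Ω → ℝ) (hXmeas : Measurable X) (hYmeas : Measurable Y)
    (hXlaw : ∀ k : ℕ, μ {ω | X ω = k} = ENNReal.ofReal ((n.choose k : ℝ) * (1 / 2) ^ n))
    (hYlaw : ∀ k : ℕ, μ {ω | Y ω = k} = ENNReal.ofReal ((m.choose k : ℝ) * (1 / 2) ^ m))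
    (hindep : ProbabilityTheory.IndepFun X Y μ) :
    ∀ lam : ℝ, |lam| ≤ 2 / Real.sqrt (n * m) →
      ∫ ω, Real.exp (lam * (X ω - n / 2) * (Y ω - m / 2)) ∂μ ≤
        Real.exp (5 * n * m * lam ^ 2 / 32) :=
  stmt_19_general μ n m X Y hXmeas hYmeas hXlaw hYlaw hindep
end
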